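/- If the sequent Γ, [∗] is derivable in the synchronous forwarder calculus, then for every natural number n the sequent Γ, [∗]^n (Γ together with n boxed unit tokens) is derivable. -/
import Mathlib


/-- Formulas of classical linear logic. -/
inductive Formula : Type
  | atom : ℕ → Formula
  | natom : ℕ → Formula
  | one : Formula
  | bot : Formula
  | tens : Formula → Formula → Formula
  | parr : Formula → Formula → Formula
  | oplus : Formula → Formula → Formula
  | with_ : Formula → Formula → Formula
  | bang : Formula → Formula
  | quest : Formula → Formula
  deriving DecidableEq

/-- The involutive De Morgan dual of classical linear logic. -/
def Formula.dual : Formula → Formula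
  | .atom n => .natom n
  | .natom n => .atom n
  | .one => .bot
  | .bot => .one
  | .tens A B => .parr A.dual B.dual
  | .parr A B => .tens A.dual B.dual
  | .oplus A B => .with_ A.dual B.dual
  | .with_ A B => .oplus A.dual B.dual
  | .bang A => .quest A.dual
  | .quest A => .bang A.dual

/-- Items occurring in sequents of the synchronous forwarder calculus:
plain formulas, the boxed star token `[∗]`, boxed contexts `[Δ]`,
left/right selection annotations `L⟦Δ⟧C` / `R⟦Δ⟧C`, and query
annotations `Q⟦Δ⟧C`. -/
inductive Item : Type
  | form : Formula → Item
  | star : Item                               -- [∗]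
  | box : List Item → Item                    -- [Δ]
  | sel : Bool → List Formula → Formula → Item  -- true = L⟦Δ⟧C, false = R⟦Δ⟧C
  | query : List Formula → Formula → Item       -- Q⟦Δ⟧C

open Formula Item

/-- Derivability of sequents (multisets of items) in the synchronous
forwarder calculus. -/
inductive Derives : Multiset Item → Prop
  | ax (A : Formula) : Derives {form A.dual, form A}
  | one (n : ℕ) : Derives (form .one ::ₘ Multiset.replicate n star)
  | bot (Γ : Multiset Item) : Derives (star ::ₘ Γ) → Derives (form .bot ::ₘ Γ)
  | tens (Γ : Multiset Item) (Δ₁ : List Item) (Δ₂ : Multiset Item) (A B : Formula) :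
      Derives (form A ::ₘ ↑Δ₁) → Derives (form B ::ₘ Γ + Δ₂) →
      Derives (form (A.tens B) ::ₘ box Δ₁ ::ₘ Γ + Δ₂)
  | parr (Γ : Multiset Item) (A B : Formula) :
      Derives (form B ::ₘ box [form A] ::ₘ Γ) → Derives (form (A.parr B) ::ₘ Γ)
  | wth (Γ : Multiset Item) (Δ : List Formula) (A B : Formula) :
      Derives (sel true Δ A ::ₘ Γ) → Derives (sel false Δ B ::ₘ Γ) →
      Derives (form (A.with_ B) ::ₘ ↑(Δ.map form) + Γ)
  | selL (Γ : Multiset Item) (C : Formula) :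
      Derives (form C ::ₘ Γ) → Derives (sel true [] C ::ₘ Γ)
  | selR (Γ : Multiset Item) (C : Formula) :
      Derives (form C ::ₘ Γ) → Derives (sel false [] C ::ₘ Γ)
  | oplus₁ (Γ : Multiset Item) (Δ : List Formula) (A B C : Formula) :
      Derives (form A ::ₘ sel true Δ C ::ₘ Γ) →
      Derives (sel true (A.oplus B :: Δ) C ::ₘ Γ)
  | oplus₂ (Γ : Multiset Item) (Δ : List Formula) (A B C : Formula) :
      Derives (form B ::ₘ sel false Δ C ::ₘ Γ) →
      Derives (sel false (A.oplus B :: Δ) C ::ₘ Γ)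
  | bang (Δ : List Formula) (A : Formula) :
      Derives {query (Δ.map .quest) A} →
      Derives (form A.bang ::ₘ ↑((Δ.map Formula.quest).map form))
  | quest (Γ : Multiset Item) (Δ : List Formula) (A C : Formula) :
      Derives (form A ::ₘ query Δ C ::ₘ Γ) →
      Derives (query (A.quest :: Δ) C ::ₘ Γ)
  | qu (Γ : Multiset Item) (C : Formula) :
      Derives (form C ::ₘ Γ) → Derives (query [] C ::ₘ Γ)

open Derives


private lemma peel {x : Item} {s Γ : Multiset Item}
    (h : x ::ₘ s = Item.star ::ₘ Γ) (hne : x ≠ Item.star) :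
    ∃ cs, s = Item.star ::ₘ cs ∧ Γ = x ::ₘ cs := by
  rcases Multiset.cons_eq_cons.mp h with ⟨h1, _⟩ | ⟨_, cs, h1, h2⟩
  · exact absurd h1 hne
  · exact ⟨cs, h1, h2⟩

private lemma shuf (n : ℕ) (a : Item) (s : Multiset Item) :
    Multiset.replicate n Item.star + (a ::ₘ s) = a ::ₘ (Multiset.replicate n Item.star + s) := by
  rw [add_comm, Multiset.cons_add, add_comm]

private lemma add_cons' (s : Multiset Item) (a : Item) (t : Multiset Item) :
    s + (a ::ₘ t) = a ::ₘ (s + t) := by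
  rw [add_comm, Multiset.cons_add, add_comm]

private lemma key : ∀ {S}, Derives S → ∀ Γ (n : ℕ), S = Item.star ::ₘ Γ →
    Derives (Multiset.replicate n Item.star + Γ) := by
  intro S d
  induction d with
  | ax A =>
    intro Γ n h
    exfalso
    have hm : Item.star ∈ Item.star ::ₘ Γ := Multiset.mem_cons_self _ _
    rw [← h] at hm
    simp at hm
  | one m =>
    intro Γ n h
    obtain ⟨cs, h1, h2⟩ := peel h (by simp)
    have hm : m ≠ 0 := by
      rintro rfl
      rw [Multiset.replicate_zero] at h1
      exact Multiset.cons_ne_zero h1.symm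
    have hcs : cs = Multiset.replicate (m - 1) Item.star := by
      apply Multiset.eq_replicate.mpr
      constructor
      · have := congrArg Multiset.card h1
        simp at this; omega
      · intro b hb
        have hb2 : b ∈ Multiset.replicate m Item.star := by
          rw [h1]; exact Multiset.mem_cons_of_mem hb
        exact Multiset.eq_of_mem_replicate hb2
    subst h2; subst hcs
    rw [shuf, ← Multiset.replicate_add]
    exact Derives.one _
  | bot Γ' hd ih =>
    intro Γ n h
    obtain ⟨cs, h1, h2⟩ := peel h (by simp)
    subst h2
    have hih := ih Γ' n rfl
    rw [h1, shuf] at hih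
    have := Derives.bot _ hih
    rwa [shuf]
  | tens Γt Δ₁ Δ₂ A B hd1 hd2 ih1 ih2 =>
    intro Γ n h
    rw [Multiset.cons_add, Multiset.cons_add] at h
    obtain ⟨cs1, h1, h2⟩ := peel h (by simp)
    obtain ⟨cs2, h3, h4⟩ := peel h1 (by simp)
    subst h2; subst h4
    have hih := ih2 (form B ::ₘ cs2) n
      (by rw [Multiset.cons_add, h3, Multiset.cons_swap])
    rw [shuf] at hih
    have hstep := Derives.tens (Multiset.replicate n Item.star + cs2) Δ₁ 0 A B hd1
      (by rw [add_zero]; exact hih)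
    rw [add_zero] at hstep
    rwa [shuf, shuf]
  | parr Γp A B hd ih =>
    intro Γ n h
    obtain ⟨cs, h1, h2⟩ := peel h (by simp)
    subst h2
    have hih := ih (form B ::ₘ box [form A] ::ₘ cs) n
      (by rw [h1, Multiset.cons_swap Item.star, Multiset.cons_swap Item.star])
    rw [shuf, shuf] at hih
    have := Derives.parr _ A B hih
    rwa [shuf]
  | wth Γw Δ A B hd1 hd2 ih1 ih2 =>
    intro Γ n h
    rw [Multiset.cons_add] at h
    obtain ⟨cs, h1, h2⟩ := peel h (by simp)
    subst h2
    have hmem : Item.star ∈ (↑(Δ.map form) : Multiset Item) + Γw := by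
      rw [h1]; exact Multiset.mem_cons_self _ _
    have hstar : Item.star ∈ Γw := by
      rcases Multiset.mem_add.mp hmem with hl | hr
      · exfalso; simp at hl
      · exact hr
    obtain ⟨Γ₀, hΓ₀⟩ := Multiset.exists_cons_of_mem hstar
    have hcs : cs = ↑(Δ.map form) + Γ₀ := by
      have he : Item.star ::ₘ cs = Item.star ::ₘ (↑(Δ.map form) + Γ₀) := by
        rw [← h1, hΓ₀, add_cons']
      exact (Multiset.cons_inj_right _).mp he
    subst hcs
    have hihL := ih1 (sel true Δ A ::ₘ Γ₀) n (by rw [hΓ₀, Multiset.cons_swap])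
    have hihR := ih2 (sel false Δ B ::ₘ Γ₀) n (by rw [hΓ₀, Multiset.cons_swap])
    rw [shuf] at hihL hihR
    have hstep := Derives.wth (Multiset.replicate n Item.star + Γ₀) Δ A B hihL hihR
    rw [Multiset.cons_add] at hstep
    rw [shuf, add_left_comm]
    exact hstep
  | selL Γs C hd ih =>
    intro Γ n h
    obtain ⟨cs, h1, h2⟩ := peel h (by simp)
    subst h2
    have hih := ih (form C ::ₘ cs) n (by rw [h1, Multiset.cons_swap])
    rw [shuf] at hih
    have := Derives.selL _ C hih
    rwa [shuf]
  | selR Γs C hd ih =>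
    intro Γ n h
    obtain ⟨cs, h1, h2⟩ := peel h (by simp)
    subst h2
    have hih := ih (form C ::ₘ cs) n (by rw [h1, Multiset.cons_swap])
    rw [shuf] at hih
    have := Derives.selR _ C hih
    rwa [shuf]
  | oplus₁ Γo Δ A B C hd ih =>
    intro Γ n h
    obtain ⟨cs, h1, h2⟩ := peel h (by simp)
    subst h2
    have hih := ih (form A ::ₘ sel true Δ C ::ₘ cs) n
      (by rw [h1, Multiset.cons_swap Item.star, Multiset.cons_swap Item.star])
    rw [shuf, shuf] at hih
    have := Derives.oplus₁ _ Δ A B C hih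
    rwa [shuf]
  | oplus₂ Γo Δ A B C hd ih =>
    intro Γ n h
    obtain ⟨cs, h1, h2⟩ := peel h (by simp)
    subst h2
    have hih := ih (form B ::ₘ sel false Δ C ::ₘ cs) n
      (by rw [h1, Multiset.cons_swap Item.star, Multiset.cons_swap Item.star])
    rw [shuf, shuf] at hih
    have := Derives.oplus₂ _ Δ A B C hih
    rwa [shuf]
  | bang Δ A hd ih =>
    intro Γ n h
    exfalso
    obtain ⟨cs, h1, h2⟩ := peel h (by simp)
    have hm : Item.star ∈ (↑((Δ.map Formula.quest).map form) : Multiset Item) := by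
      rw [h1]; exact Multiset.mem_cons_self _ _
    simp at hm
  | quest Γq Δ A C hd ih =>
    intro Γ n h
    obtain ⟨cs, h1, h2⟩ := peel h (by simp)
    subst h2
    have hih := ih (form A ::ₘ query Δ C ::ₘ cs) n
      (by rw [h1, Multiset.cons_swap Item.star, Multiset.cons_swap Item.star])
    rw [shuf, shuf] at hih
    have := Derives.quest _ Δ A C hih
    rwa [shuf]
  | qu Γq C hd ih =>
    intro Γ n h
    obtain ⟨cs, h1, h2⟩ := peel h (by simp)
    subst h2
    have hih := ih (form C ::ₘ cs) n (by rw [h1, Multiset.cons_swap])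
    rw [shuf] at hih
    have := Derives.qu _ C hih
    rwa [shuf]

/-- Lemma: if `Γ, [∗]` is derivable then `Γ, [∗]^n` is derivable for every `n`. -/
theorem star_weaken (Γ : Multiset Item) (h : Derives (star ::ₘ Γ)) :
    ∀ n : ℕ, Derives (Multiset.replicate n star + Γ) := fun n => key h Γ n rfl
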